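/- Let m, p, q be integers with 0 ≤ q ≤ p and p + q ≤ m, and let X̂ be an m-by-q complex matrix with orthonormal columns (X̂*X̂ = I_q). Then there exist unitary matrices U₁ ∈ U(p), U₂ ∈ U(m−p), V₁ ∈ U(q) and angles θ₁, …, θ_q ∈ [0, π/2] such that, with C = diag(cos θ₁, …, cos θ_q) and S = diag(sin θ₁, …, sin θ_q), X̂ = diag(U₁, U₂) · Σ̂ · V₁*, where Σ̂ is the m-by-q real matrix whose row-partitioned blocks (of heights q, p−q, q, m−p−q) are [C], [0], [−S], [0]. -/

import Mathlib

open Matrix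

/-- The middle factor of the 2-by-1 CS decomposition: an `m × q` real matrix
whose row-partitioned blocks of heights `q, p−q, q, m−p−q` are
`[C], [0], [−S], [0]`. -/
noncomputable def csd21Sigma (m p q : ℕ) (θ : Fin q → ℝ) : Matrix (Fin m) (Fin q) ℝ :=
  fun i j =>
    if hi : i.val < q then
      if j.val = i.val then Real.cos (θ ⟨i.val, hi⟩) else 0
    else if hi2 : i.val < p then 0
    else if hi3 : i.val < p + q then
      if j.val = i.val - p then -Real.sin (θ ⟨i.val - p, by omega⟩) else 0
    else 0

/-- The block diagonal matrix `diag(A, B)` of sizes `k` and `m - k`, viewed as an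
`m × m` matrix (for `k ≤ m`). -/
def blockDiagC (m k : ℕ) (h : k ≤ m) (A : Matrix (Fin k) (Fin k) ℂ)
    (B : Matrix (Fin (m - k)) (Fin (m - k)) ℂ) : Matrix (Fin m) (Fin m) ℂ :=
  Matrix.reindex (finSumFinEquiv.trans (finCongr (Nat.add_sub_cancel' h)))
    (finSumFinEquiv.trans (finCongr (Nat.add_sub_cancel' h)))
    (Matrix.fromBlocks A 0 0 B)

/-! Split the rows of `X̂` into the blocks `X₁` and `X₂`. Since `X₁ᴴ X₁ + X₂ᴴ X₂ = 1`, a unitary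
`V` diagonalizing the Hermitian matrix `X₁ᴴ X₁` also diagonalizes `X₂ᴴ X₂`, with eigenvalues
`cos² θⱼ` and `sin² θⱼ`. So `X₁ V` and `X₂ V` have orthogonal columns of lengths `cos θⱼ` and
`sin θⱼ`; normalizing the nonzero columns and extending them to orthonormal bases gives `U₁`
and `U₂`. -/

open scoped ComplexOrder

namespace Matrix

variable {𝕜 n ι α : Type*}

def embDiagonal [DecidableEq n] [Zero α] (f : ι ↪ n) (d : ι → α) : Matrix n ι α :=
  of fun i j => if i = f j then d j else 0

lemma mul_embDiagonal_apply [Fintype n] [DecidableEq n] [NonUnitalNonAssocSemiring α]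
    (U : Matrix n n α) (f : ι ↪ n) (d : ι → α) (i : n) (j : ι) :
    (U * embDiagonal f d) i j = U i (f j) * d j := by
  simp [embDiagonal, mul_apply, mul_ite]

lemma inner_toLp_col [RCLike 𝕜] [Fintype n] (Y : Matrix n ι 𝕜) (j k : ι) :
    inner 𝕜 (WithLp.toLp 2 (Y.col j)) (WithLp.toLp 2 (Y.col k)) = (Yᴴ * Y) j k := by
  simp [EuclideanSpace.inner_toLp_toLp, col, mul_apply, dotProduct, mul_comm]

lemma nonneg_of_conjTranspose_mul_self_eq_diagonal [RCLike 𝕜] [Fintype n] [Fintype ι]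
    [DecidableEq ι] {M : Matrix n ι 𝕜} {d : ι → ℝ} (h : Mᴴ * M = diagonal fun j => (d j : 𝕜))
    (j : ι) : 0 ≤ d j := by
  have := (posSemidef_conjTranspose_mul_self M).diag_nonneg (i := j)
  rwa [h, diagonal_apply_eq, RCLike.ofReal_nonneg] at this

theorem exists_unitary_mul_embDiagonal [RCLike 𝕜] [Fintype n] [DecidableEq n] [DecidableEq ι]
    (f : ι ↪ n) (Y : Matrix n ι 𝕜) {c : ι → ℝ}
    (hY : Yᴴ * Y = diagonal fun j => ((c j ^ 2 : ℝ) : 𝕜)) :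
    ∃ U ∈ unitaryGroup n 𝕜, Y = U * embDiagonal f fun j => (c j : 𝕜) := by
  set w : ι → EuclideanSpace 𝕜 n := fun j => (c j : 𝕜)⁻¹ • WithLp.toLp 2 (Y.col j)
  -- reindexed by `n` through `f`, so that the orthonormal basis extending it is indexed by `n`
  have hw : Orthonormal 𝕜 ((f '' {j | c j ≠ 0}).domRestrict (Function.extend f w 0)) := by
    rw [orthonormal_iff_ite]
    rintro ⟨_, j, hj, rfl⟩ ⟨_, k, hk, rfl⟩
    simp only [Set.domRestrict_apply, f.injective.extend_apply, w, inner_smul_left,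
      inner_smul_right, inner_toLp_col, hY, diagonal_apply, Subtype.ext_iff,
      f.injective.eq_iff]
    split_ifs with hjk
    · subst hjk
      have : (c j : 𝕜) ≠ 0 := by exact_mod_cast hj
      simp only [map_inv₀, RCLike.conj_ofReal, map_pow]
      field_simp
    · simp
  obtain ⟨b, hb⟩ := hw.exists_orthonormalBasis_extension_of_card_eq (by simp)
  refine ⟨(EuclideanSpace.basisFun n 𝕜).toBasis.toMatrix b.toBasis,
    (EuclideanSpace.basisFun n 𝕜).toMatrix_orthonormalBasis_mem_unitary b, ?_⟩
  ext i j
  rw [mul_embDiagonal_apply, Module.Basis.toMatrix_apply]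
  by_cases hcj : c j = 0
  · -- column `f j` of `U` is arbitrary here, which is harmless since `Y.col j = 0`
    have : WithLp.toLp 2 (Y.col j) = 0 :=
      inner_self_eq_zero.mp (by rw [inner_toLp_col, hY]; simp [hcj])
    simpa [hcj] using congrFun (congrArg WithLp.ofLp this) i
  · have hcj' : (c j : 𝕜) ≠ 0 := by exact_mod_cast hcj
    simp [hb (f j) ⟨j, hcj, rfl⟩, f.injective.extend_apply, w, hcj', mul_comm]

variable [RCLike 𝕜] [Fintype ι] [DecidableEq ι] {n₁ n₂ : Type*} [Fintype n₁] [Fintype n₂]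

theorem exists_unitary_diagonalize_of_conjTranspose_mul_self_add_eq_one (X₁ : Matrix n₁ ι 𝕜)
    (X₂ : Matrix n₂ ι 𝕜) (hX : X₁ᴴ * X₁ + X₂ᴴ * X₂ = 1) :
    ∃ V ∈ unitaryGroup ι 𝕜, ∃ μ : ι → ℝ,
      (X₁ * V)ᴴ * (X₁ * V) = diagonal (fun j => (μ j : 𝕜)) ∧
      (X₂ * V)ᴴ * (X₂ * V) = diagonal (fun j => ((1 - μ j : ℝ) : 𝕜)) := by
  have hA : (X₁ᴴ * X₁).IsHermitian := isHermitian_conjTranspose_mul_self X₁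
  set V : Matrix ι ι 𝕜 := (hA.eigenvectorUnitary : Matrix ι ι 𝕜)
  have hV : Vᴴ * V = 1 := mem_unitaryGroup_iff'.mp hA.eigenvectorUnitary.2
  have h₁ : (X₁ * V)ᴴ * (X₁ * V) = diagonal (fun j => (hA.eigenvalues j : 𝕜)) := by
    have := hA.conjStarAlgAut_star_eigenvectorUnitary
    rw [Unitary.conjStarAlgAut_star_apply] at this
    simpa [V, Matrix.mul_assoc, star_eq_conjTranspose, Function.comp_def] using this
  refine ⟨V, hA.eigenvectorUnitary.2, hA.eigenvalues, h₁, ?_⟩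
  calc (X₂ * V)ᴴ * (X₂ * V) = Vᴴ * (X₁ᴴ * X₁ + X₂ᴴ * X₂) * V - (X₁ * V)ᴴ * (X₁ * V) := by
        simp only [conjTranspose_mul, Matrix.mul_add, Matrix.add_mul, Matrix.mul_assoc]
        abel
    _ = _ := by
        rw [hX, Matrix.mul_one, hV, h₁, ← diagonal_one, diagonal_sub]
        push_cast
        rfl

variable [DecidableEq n₁] [DecidableEq n₂]

open Real in
theorem exists_csd_of_conjTranspose_mul_self_add_eq_one (f₁ : ι ↪ n₁) (f₂ : ι ↪ n₂)
    (X₁ : Matrix n₁ ι 𝕜) (X₂ : Matrix n₂ ι 𝕜) (hX : X₁ᴴ * X₁ + X₂ᴴ * X₂ = 1) :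
    ∃ U₁ ∈ unitaryGroup n₁ 𝕜, ∃ U₂ ∈ unitaryGroup n₂ 𝕜, ∃ V ∈ unitaryGroup ι 𝕜, ∃ θ : ι → ℝ,
      (∀ j, θ j ∈ Set.Icc 0 (π / 2)) ∧
      X₁ = U₁ * embDiagonal f₁ (fun j => (cos (θ j) : 𝕜)) * Vᴴ ∧
      X₂ = U₂ * -embDiagonal f₂ (fun j => (sin (θ j) : 𝕜)) * Vᴴ := by
  obtain ⟨V, hV, μ, h₁, h₂⟩ :=
    exists_unitary_diagonalize_of_conjTranspose_mul_self_add_eq_one X₁ X₂ hX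
  have hμ₁ (j : ι) : μ j ≤ 1 :=
    sub_nonneg.mp (nonneg_of_conjTranspose_mul_self_eq_diagonal h₂ j)
  set θ : ι → ℝ := fun j => arccos √(μ j)
  have hcos (j : ι) : cos (θ j) ^ 2 = μ j := by
    rw [cos_arccos (by linarith [sqrt_nonneg (μ j)]) (sqrt_le_one.mpr (hμ₁ j)),
      sq_sqrt (nonneg_of_conjTranspose_mul_self_eq_diagonal h₁ j)]
  have hsin (j : ι) : sin (θ j) ^ 2 = 1 - μ j := by rw [sin_sq, hcos]
  obtain ⟨U₁, hU₁, hY₁⟩ := exists_unitary_mul_embDiagonal f₁ (X₁ * V)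
    (c := fun j => cos (θ j)) (by simpa only [hcos] using h₁)
  obtain ⟨U₂, hU₂, hY₂⟩ := exists_unitary_mul_embDiagonal f₂ (-(X₂ * V))
    (c := fun j => sin (θ j))
    (by simpa only [hsin, conjTranspose_neg, Matrix.neg_mul, Matrix.mul_neg, neg_neg] using h₂)
  have hVV : V * Vᴴ = 1 := mem_unitaryGroup_iff.mp hV
  refine ⟨U₁, hU₁, U₂, hU₂, V, hV, θ,
    fun j => ⟨arccos_nonneg _, arccos_le_pi_div_two.mpr (sqrt_nonneg _)⟩, ?_, ?_⟩
  · rw [← hY₁, Matrix.mul_assoc, hVV, Matrix.mul_one]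
  · rw [Matrix.mul_neg, ← hY₂, neg_neg, Matrix.mul_assoc, hVV, Matrix.mul_one]

end Matrix

def finSumFinSubEquiv {m k : ℕ} (h : k ≤ m) : Fin k ⊕ Fin (m - k) ≃ Fin m :=
  finSumFinEquiv.trans (finCongr (Nat.add_sub_cancel' h))

lemma blockDiagC_eq_submatrix {m k : ℕ} (h : k ≤ m) (A : Matrix (Fin k) (Fin k) ℂ)
    (B : Matrix (Fin (m - k)) (Fin (m - k)) ℂ) :
    blockDiagC m k h A B =
      (fromBlocks A 0 0 B).submatrix (finSumFinSubEquiv h).symm (finSumFinSubEquiv h).symm :=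
  rfl

lemma csd21Sigma_submatrix {m p q : ℕ} (hqp : q ≤ p) (hpm : p ≤ m) (hqm : q ≤ m - p)
    (θ : Fin q → ℝ) :
    ((csd21Sigma m p q θ).map Complex.ofReal).submatrix (finSumFinSubEquiv hpm) id =
      fromRows (embDiagonal (Fin.castLEEmb hqp) fun j => (Real.cos (θ j) : ℂ))
        (-embDiagonal (Fin.castLEEmb hqm) fun j => (Real.sin (θ j) : ℂ)) := by
  ext (i | i) j
  · by_cases hij : (i : ℕ) = j
    · have hi : (i : ℕ) < q := hij ▸ j.isLt
      obtain rfl : j = ⟨i, hi⟩ := Fin.ext hij.symm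
      simp [csd21Sigma, embDiagonal, finSumFinSubEquiv, hi]
    · simp [csd21Sigma, embDiagonal, finSumFinSubEquiv, Fin.ext_iff, hij, Ne.symm hij]
  · have hpi : ¬p + (i : ℕ) < q := by omega
    by_cases hij : (i : ℕ) = j
    · have hi : (i : ℕ) < q := hij ▸ j.isLt
      obtain rfl : j = ⟨i, hi⟩ := Fin.ext hij.symm
      simp [csd21Sigma, embDiagonal, finSumFinSubEquiv, hpi, hi]
    · simp [csd21Sigma, embDiagonal, finSumFinSubEquiv, Fin.ext_iff, hpi, hij, Ne.symm hij]

/-- The 2-by-1 CS decomposition of a matrix with orthonormal columns whose rows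
are partitioned into blocks of sizes `p` and `m − p`. -/
theorem csd_two_by_one (m p q : ℕ) (hqp : q ≤ p) (hpqm : p + q ≤ m)
    (Xhat : Matrix (Fin m) (Fin q) ℂ) (hX : Xhatᴴ * Xhat = 1) :
    ∃ (U₁ : Matrix (Fin p) (Fin p) ℂ) (U₂ : Matrix (Fin (m - p)) (Fin (m - p)) ℂ)
      (V₁ : Matrix (Fin q) (Fin q) ℂ) (θ : Fin q → ℝ),
      U₁ ∈ Matrix.unitaryGroup (Fin p) ℂ ∧
      U₂ ∈ Matrix.unitaryGroup (Fin (m - p)) ℂ ∧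
      V₁ ∈ Matrix.unitaryGroup (Fin q) ℂ ∧
      (∀ i, θ i ∈ Set.Icc 0 (Real.pi / 2)) ∧
      Xhat = blockDiagC m p (by omega) U₁ U₂ *
          (csd21Sigma m p q θ).map Complex.ofReal * V₁ᴴ := by
  have hpm : p ≤ m := by omega
  have hqm : q ≤ m - p := by omega
  set e := finSumFinSubEquiv hpm
  set X := Xhat.submatrix e id
  have hX' : X.toRows₁ᴴ * X.toRows₁ + X.toRows₂ᴴ * X.toRows₂ = 1 := by
    rw [← fromCols_mul_fromRows, ← conjTranspose_fromRows_eq_fromCols_conjTranspose,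
      fromRows_toRows, conjTranspose_submatrix, submatrix_mul_equiv, hX, submatrix_id_id]
  obtain ⟨U₁, hU₁, U₂, hU₂, V, hV, θ, hθ, h₁, h₂⟩ :=
    exists_csd_of_conjTranspose_mul_self_add_eq_one (Fin.castLEEmb hqp) (Fin.castLEEmb hqm)
      _ _ hX'
  refine ⟨U₁, U₂, V, θ, hU₁, hU₂, hV, hθ, ?_⟩
  have hXV : X = fromBlocks U₁ 0 0 U₂ *
      ((csd21Sigma m p q θ).map Complex.ofReal).submatrix e id * Vᴴ := by
    rw [csd21Sigma_submatrix hqp hpm hqm, ← fromRows_toRows X, h₁, h₂, fromBlocks_mul_fromRows,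
      fromRows_mul]
    simp [Matrix.mul_assoc]
  calc Xhat = X.submatrix e.symm id := by simp [X]
    _ = _ := by
      rw [hXV, submatrix_mul _ _ _ id _ Function.bijective_id, submatrix_id_id,
        ← submatrix_mul_equiv _ _ _ e.symm, blockDiagC_eq_submatrix]
      simp [e]
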